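/- If f : A → W is a function between finite types, p a probability mass function on A with pushforward q, and H(f_*p) = H(p), then f is injective on the support of p. -/

import Mathlib

open Finset
open scoped Classical

/-- Shannon entropy of a finitely supported distribution, with `0 * log 0 = 0`. -/
noncomputable def entropy {A : Type*} [Fintype A] (p : A → ℝ) : ℝ :=
  -∑ a, p a * Real.log (p a)

/-- Pushforward of a distribution along a map. -/
noncomputable def push {A W : Type*} [Fintype A] (f : A → W) (p : A → ℝ) : W → ℝ :=
  fun w => ∑ a, if f a = w then p a else 0

/-- `p` is a probability mass function. -/
def IsPMF {A : Type*} [Fintype A] (p : A → ℝ) : Prop :=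
  (∀ a, 0 ≤ p a) ∧ ∑ a, p a = 1

theorem injOn_support_of_entropy_push_eq {A W : Type*} [Fintype A] [Fintype W]
    (f : A → W) (p : A → ℝ) (hp : IsPMF p)
    (h : entropy (push f p) = entropy p) :
    Set.InjOn f {a | 0 < p a} := by
  obtain ⟨hp0, hp1⟩ := hp
  set q := push f p with hq
  -- each fiber sum dominates any single term
  have hqpos : ∀ a, p a ≤ q (f a) := by
    intro a
    have : p a = (if f a = f a then p a else 0) := by simp
    rw [this, hq, push]
    exact Finset.single_le_sum (f := fun i => if f i = f a then p i else 0)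
      (fun i _ => by split <;> [exact hp0 i; exact le_rfl]) (Finset.mem_univ a)
  -- rewrite entropy of q as a sum over A
  have hsum : ∑ w, q w * Real.log (q w) = ∑ a, p a * Real.log (q (f a)) := by
    rw [hq]
    simp only [push, Finset.sum_mul, ite_mul, zero_mul]
    rw [Finset.sum_comm]
    refine Finset.sum_congr rfl fun a _ => ?_
    simp
  have hdiff : ∑ a, p a * (Real.log (q (f a)) - Real.log (p a)) = 0 := by
    have : entropy q = -∑ a, p a * Real.log (q (f a)) := by
      rw [entropy, hsum]
    rw [this, entropy] at h
    have := neg_injective h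
    simp only [mul_sub]
    rw [Finset.sum_sub_distrib, this, sub_self]
  have hterm : ∀ a ∈ Finset.univ, 0 ≤ p a * (Real.log (q (f a)) - Real.log (p a)) := by
    intro a _
    rcases eq_or_lt_of_le (hp0 a) with h0 | h0
    · simp [← h0]
    · have := Real.log_le_log h0 (hqpos a)
      nlinarith
  have hzero := (Finset.sum_eq_zero_iff_of_nonneg hterm).mp hdiff
  -- hence q (f a) = p a for a in support
  have hqeq : ∀ a, 0 < p a → q (f a) = p a := by
    intro a ha
    have hz := hzero a (Finset.mem_univ a)
    have hlog : Real.log (q (f a)) = Real.log (p a) := by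
      rcases mul_eq_zero.mp hz with h' | h'
      · exact absurd h' (ne_of_gt ha)
      · linarith [sub_eq_zero.mp h']
    have hqa : 0 < q (f a) := lt_of_lt_of_le ha (hqpos a)
    exact Real.log_injOn_pos (Set.mem_Ioi.mpr hqa) (Set.mem_Ioi.mpr ha) hlog
  intro a ha b hb hab
  by_contra hne
  have hpair : p a + p b ≤ q (f a) := by
    have h1 : ∑ i ∈ ({a, b} : Finset A), (if f i = f a then p i else 0) = p a + p b := by
      rw [Finset.sum_pair hne]
      simp [hab]
    rw [hq, push, ← h1]
    exact Finset.sum_le_sum_of_subset_of_nonneg (Finset.subset_univ _)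
      (fun i _ _ => by split <;> [exact hp0 i; exact le_rfl])
  have := hqeq a ha
  have hbpos : 0 < p b := hb
  linarith
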